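/- arXiv:2311.15932 — 2 statements merged into one kernel-verified Lean document; each statement's English description precedes it below -/
import Mathlib

section
/- Let N ≥ 2 and K ≥ 1 be integers, let X, Y ∈ ℝ^N, let P be a symmetric N×N real matrix, set M := I_N − P, and assume M_{ii} ≠ 0 for all i and M_{ii}M_{jj} + M_{ij}² ≠ 0 for all i ≠ j. Define P̃²_{ij} := P_{ij}²/(M_{ii}M_{jj} + M_{ij}²), Q_{AB} := K^{−1/2} Σ_{i=1}^N Σ_{j≠i} P_{ij} A_i B_j for vectors A, B ∈ ℝ^N, and for β₀ ∈ ℝ set e(β₀) := Y − β₀X. Assume Q_{XX} ≠ 0 and define β̂_JIVE := (Σ_i Σ_{j≠i} P_{ij} Y_i X_j)/(Σ_i Σ_{j≠i} P_{ij} X_i X_j), ê := Y − β̂_JIVE·X, V̂ := [Σ_i (Σ_{j≠i} P_{ij}X_j)² ê_i (Mê)_i / M_{ii} + Σ_i Σ_{j≠i} P̃²_{ij} (MX)_i ê_i (MX)_j ê_j] / (Σ_i Σ_{j≠i} P_{ij} X_i X_j)², and t̂² := (β̂_JIVE − β₀)²/V̂. Define Υ̂ := (1/K) Σ_i (Σ_{j≠i}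 P_{ij}X_j)² X_i(MX)_i/M_{ii} + (1/K) Σ_i Σ_{j≠i} P̃²_{ij}(MX)_i X_i (MX)_j X_j; Ψ̂(β₀) := (1/K) Σ_i (Σ_{j≠i} P_{ij}X_j)² e_i(β₀)(Me(β₀))_i/M_{ii} + (1/K) Σ_i Σ_{j≠i} P̃²_{ij}(MX)_i e_i(β₀)(MX)_j e_j(β₀); τ̂(β₀) := (1/2)[(1/K) Σ_i (Σ_{j≠i} P_{ij}X_j)² (X_i(Me(β₀))_i/M_{ii} + e_i(β₀)(MX)_i/M_{ii}) + (1/K) Σ_i Σ_{j≠i} P̃²_{ij}((MX)_i X_i (MX)_j e_j(β₀) + (MX)_i e_i(β₀)(MX)_j X_j)]. Assume Ψ̂(β₀) > 0, Υ̂ > 0, and V̂ ≠ 0, and define ξ̂ := Q_{Xe(β₀)}/√Ψ̂(β₀), ν̂ := Q_{XX}/√Υ̂, ρ̂ := τ̂(β₀)/√(Ψ̂(β₀)Υ̂). Then the exact algebraic identity t̂² = ξ̂² / (1 − 2(ξ̂/ν̂)ρ̂ + ξ̂²/ν̂²) holds. -/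
open Finset Matrix

noncomputable section

/-- `Q_{AB} := K^{-1/2} ∑_i ∑_{j ≠ i} P_{ij} A_i B_j`. -/
def Qstat {N : ℕ} (K : ℕ) (P : Matrix (Fin N) (Fin N) ℝ) (A B : Fin N → ℝ) : ℝ :=
  (Real.sqrt K)⁻¹ * ∑ i, ∑ j ∈ univ.erase i, P i j * A i * B j

/-- The annihilator matrix `M := I - P`. -/
def Mmat {N : ℕ} (P : Matrix (Fin N) (Fin N) ℝ) : Matrix (Fin N) (Fin N) ℝ := 1 - P

/-- `P̃²_{ij} := P_{ij}² / (M_{ii} M_{jj} + M_{ij}²)`. -/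
def Ptilde2 {N : ℕ} (P : Matrix (Fin N) (Fin N) ℝ) (i j : Fin N) : ℝ :=
  P i j ^ 2 / (Mmat P i i * Mmat P j j + Mmat P i j ^ 2)

/-- `Υ̂ := (1/K) ∑_i (∑_{j≠i} P_{ij} X_j)² X_i (MX)_i / M_{ii}
      + (1/K) ∑_i ∑_{j≠i} P̃²_{ij} (MX)_i X_i (MX)_j X_j`. -/
def Upshat {N : ℕ} (K : ℕ) (P : Matrix (Fin N) (Fin N) ℝ) (X : Fin N → ℝ) : ℝ :=
  (1 / (K : ℝ)) * ∑ i, (∑ j ∈ univ.erase i, P i j * X j) ^ 2 *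
      (X i * (Mmat P *ᵥ X) i / Mmat P i i) +
    (1 / (K : ℝ)) * ∑ i, ∑ j ∈ univ.erase i,
      Ptilde2 P i j * ((Mmat P *ᵥ X) i * X i) * ((Mmat P *ᵥ X) j * X j)

/-- `Ψ̂(β₀) := (1/K) ∑_i (∑_{j≠i} P_{ij} X_j)² e_i (Me)_i / M_{ii}
      + (1/K) ∑_i ∑_{j≠i} P̃²_{ij} (MX)_i e_i (MX)_j e_j`,
where `e = e(β₀)`. -/
def Psihat {N : ℕ} (K : ℕ) (P : Matrix (Fin N) (Fin N) ℝ) (X e : Fin N → ℝ) : ℝ :=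
  (1 / (K : ℝ)) * ∑ i, (∑ j ∈ univ.erase i, P i j * X j) ^ 2 *
      (e i * (Mmat P *ᵥ e) i / Mmat P i i) +
    (1 / (K : ℝ)) * ∑ i, ∑ j ∈ univ.erase i,
      Ptilde2 P i j * ((Mmat P *ᵥ X) i * e i) * ((Mmat P *ᵥ X) j * e j)

/-- `τ̂(β₀) := (1/2)[(1/K) ∑_i (∑_{j≠i} P_{ij} X_j)² (X_i (Me)_i / M_{ii} + e_i (MX)_i / M_{ii})
      + (1/K) ∑_i ∑_{j≠i} P̃²_{ij} ((MX)_i X_i (MX)_j e_j + (MX)_i e_i (MX)_j X_j)]`. -/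
def tauhat {N : ℕ} (K : ℕ) (P : Matrix (Fin N) (Fin N) ℝ) (X e : Fin N → ℝ) : ℝ :=
  (1 / 2) *
    ((1 / (K : ℝ)) * ∑ i, (∑ j ∈ univ.erase i, P i j * X j) ^ 2 *
        (X i * (Mmat P *ᵥ e) i / Mmat P i i + e i * (Mmat P *ᵥ X) i / Mmat P i i) +
      (1 / (K : ℝ)) * ∑ i, ∑ j ∈ univ.erase i,
        Ptilde2 P i j * ((Mmat P *ᵥ X) i * X i * ((Mmat P *ᵥ X) j * e j) +
          (Mmat P *ᵥ X) i * e i * ((Mmat P *ᵥ X) j * X j)))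

/-- The JIVE estimator `β̂ := (∑_i ∑_{j≠i} P_{ij} Y_i X_j) / (∑_i ∑_{j≠i} P_{ij} X_i X_j)`. -/
def betaJIVE {N : ℕ} (P : Matrix (Fin N) (Fin N) ℝ) (X Y : Fin N → ℝ) : ℝ :=
  (∑ i, ∑ j ∈ univ.erase i, P i j * Y i * X j) /
    (∑ i, ∑ j ∈ univ.erase i, P i j * X i * X j)

/-- The Mikusheva–Sun variance estimator `V̂`, built from the JIVE residual
`ê := Y - β̂ X`. -/
def Vhat {N : ℕ} (P : Matrix (Fin N) (Fin N) ℝ) (X Y : Fin N → ℝ) : ℝ :=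
  let ehat : Fin N → ℝ := fun i => Y i - betaJIVE P X Y * X i
  (∑ i, (∑ j ∈ univ.erase i, P i j * X j) ^ 2 *
      (ehat i * (Mmat P *ᵥ ehat) i / Mmat P i i) +
    ∑ i, ∑ j ∈ univ.erase i,
      Ptilde2 P i j * ((Mmat P *ᵥ X) i * ehat i) * ((Mmat P *ᵥ X) j * ehat j)) /
    (∑ i, ∑ j ∈ univ.erase i, P i j * X i * X j) ^ 2

end

private lemma expand_aux {α : Type*} (s : Finset α) (c : ℝ) (g f1 f2 f3 f4 : α → ℝ)
    (h : ∀ i ∈ s, g i = f1 i - c * (f2 i + f3 i) + c ^ 2 * f4 i) :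
    ∑ i ∈ s, g i =
      (∑ i ∈ s, f1 i) - c * ((∑ i ∈ s, f2 i) + ∑ i ∈ s, f3 i) + c ^ 2 * ∑ i ∈ s, f4 i := by
  rw [Finset.sum_congr rfl h]
  simp only [mul_add, Finset.sum_add_distrib, Finset.sum_sub_distrib, Finset.mul_sum]

private lemma sum_erase_swap {N : ℕ} (f : Fin N → Fin N → ℝ) :
    ∑ i, ∑ j ∈ Finset.univ.erase i, f i j = ∑ i, ∑ j ∈ Finset.univ.erase i, f j i := by
  have h : ∀ (g : Fin N → Fin N → ℝ) (i : Fin N),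
      ∑ j ∈ Finset.univ.erase i, g i j = ∑ j, if j ≠ i then g i j else 0 := by
    intro g i
    rw [← Finset.filter_ne', Finset.sum_filter]
  rw [show (∑ i, ∑ j ∈ Finset.univ.erase i, f i j)
      = ∑ i, ∑ j, if j ≠ i then f i j else 0 from
    Finset.sum_congr rfl fun i _ => h f i]
  rw [show (∑ i, ∑ j ∈ Finset.univ.erase i, f j i)
      = ∑ i, ∑ j, if j ≠ i then f j i else 0 from
    Finset.sum_congr rfl fun i _ => h (fun a b => f b a) i]
  rw [Finset.sum_comm]
  exact Finset.sum_congr rfl fun i _ => Finset.sum_congr rfl fun j _ =>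
    if_congr ne_comm rfl rfl


set_option maxHeartbeats 1600000 in
theorem stmt_0 (N K : ℕ) (hN : 2 ≤ N) (hK : 1 ≤ K)
    (X Y : Fin N → ℝ) (P : Matrix (Fin N) (Fin N) ℝ) (hP : P.IsSymm)
    (hMii : ∀ i, Mmat P i i ≠ 0)
    (hMij : ∀ i j, i ≠ j → Mmat P i i * Mmat P j j + Mmat P i j ^ 2 ≠ 0)
    (β₀ : ℝ) (e : Fin N → ℝ) (he : e = fun i => Y i - β₀ * X i)
    (hQXX : Qstat K P X X ≠ 0)
    (hΨ : 0 < Psihat K P X e) (hΥ : 0 < Upshat K P X)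
    (hV : Vhat P X Y ≠ 0)
    (t2 ξ ν ρ : ℝ)
    (ht2 : t2 = (betaJIVE P X Y - β₀) ^ 2 / Vhat P X Y)
    (hξ : ξ = Qstat K P X e / Real.sqrt (Psihat K P X e))
    (hν : ν = Qstat K P X X / Real.sqrt (Upshat K P X))
    (hρ : ρ = tauhat K P X e / Real.sqrt (Psihat K P X e * Upshat K P X)) :
    t2 = ξ ^ 2 / (1 - 2 * (ξ / ν) * ρ + ξ ^ 2 / ν ^ 2) := by
  have hKne : (K : ℝ) ≠ 0 := Nat.cast_ne_zero.mpr (by omega)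
  have hKnn : (0 : ℝ) ≤ (K : ℝ) := Nat.cast_nonneg K
  have hsK : 0 < Real.sqrt K := Real.sqrt_pos.mpr (by exact_mod_cast Nat.pos_of_ne_zero (by omega))
  have hsP : 0 < Real.sqrt (Psihat K P X e) := Real.sqrt_pos.mpr hΨ
  have hsU : 0 < Real.sqrt (Upshat K P X) := Real.sqrt_pos.mpr hΥ
  have hsK2 : Real.sqrt (K : ℝ) ^ 2 = (K : ℝ) := Real.sq_sqrt hKnn
  have hsP2 : Real.sqrt (Psihat K P X e) ^ 2 = Psihat K P X e := Real.sq_sqrt hΨ.le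
  have hsU2 : Real.sqrt (Upshat K P X) ^ 2 = Upshat K P X := Real.sq_sqrt hΥ.le
  have hsplit : Real.sqrt (Psihat K P X e * Upshat K P X)
      = Real.sqrt (Psihat K P X e) * Real.sqrt (Upshat K P X) := Real.sqrt_mul hΨ.le _
  set sK := Real.sqrt (K : ℝ) with hsKdef
  set sP := Real.sqrt (Psihat K P X e) with hsPdef
  set sU := Real.sqrt (Upshat K P X) with hsUdef
  set SXX := ∑ i, ∑ j ∈ univ.erase i, P i j * X i * X j with hSXX_def
  set SeX := ∑ i, ∑ j ∈ univ.erase i, P i j * e i * X j with hSeX_def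
  set SXe := ∑ i, ∑ j ∈ univ.erase i, P i j * X i * e j with hSXe_def
  have hQXX' : Qstat K P X X = (sK)⁻¹ * SXX := by simp only [Qstat]; rfl
  have hQXe' : Qstat K P X e = (sK)⁻¹ * SXe := by simp only [Qstat]; rfl
  have hSXXne : SXX ≠ 0 := by
    intro h
    exact hQXX (by rw [hQXX', h, mul_zero])
  have hsym : SXe = SeX := by
    have h1 : (∑ i, ∑ j ∈ univ.erase i, P i j * X i * e j)
        = ∑ i, ∑ j ∈ univ.erase i, P j i * X j * e i := sum_erase_swap _
    rw [hSXe_def, hSeX_def, h1]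
    exact Finset.sum_congr rfl fun i _ => Finset.sum_congr rfl fun j _ => by
      rw [hP.apply]; ring
  have hY : ∀ i, Y i = e i + β₀ * X i := fun i => by simp only [he]; ring
  have hbeta : betaJIVE P X Y = SeX / SXX + β₀ := by
    have h1 : (∑ i, ∑ j ∈ univ.erase i, P i j * Y i * X j) = SeX + β₀ * SXX := by
      rw [hSeX_def, hSXX_def]
      simp only [Finset.mul_sum, ← Finset.sum_add_distrib]
      exact Finset.sum_congr rfl fun i _ => Finset.sum_congr rfl fun j _ => by
        rw [hY i]; ring
    simp only [betaJIVE]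
    rw [h1, ← hSXX_def]
    field_simp
  have hhat : ∀ i, Y i - betaJIVE P X Y * X i = e i - SeX / SXX * X i := fun i => by
    rw [hY i, hbeta]; ring
  have hmul : (Mmat P *ᵥ fun i => Y i - betaJIVE P X Y * X i)
      = fun i => (Mmat P *ᵥ e) i - SeX / SXX * (Mmat P *ᵥ X) i := by
    funext i
    simp only [Matrix.mulVec, dotProduct]
    rw [Finset.mul_sum, ← Finset.sum_sub_distrib]
    exact Finset.sum_congr rfl fun j _ => by rw [hY j, hbeta]; ring
  set S1ee := ∑ i, (∑ j ∈ univ.erase i, P i j * X j) ^ 2 *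
      (e i * (Mmat P *ᵥ e) i / Mmat P i i) with hS1ee
  set S1Xe := ∑ i, (∑ j ∈ univ.erase i, P i j * X j) ^ 2 *
      (X i * (Mmat P *ᵥ e) i / Mmat P i i) with hS1Xe
  set S1eX := ∑ i, (∑ j ∈ univ.erase i, P i j * X j) ^ 2 *
      (e i * (Mmat P *ᵥ X) i / Mmat P i i) with hS1eX
  set S1XX := ∑ i, (∑ j ∈ univ.erase i, P i j * X j) ^ 2 *
      (X i * (Mmat P *ᵥ X) i / Mmat P i i) with hS1XX
  set S2ee := ∑ i, ∑ j ∈ univ.erase i, Ptilde2 P i j *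
      ((Mmat P *ᵥ X) i * e i) * ((Mmat P *ᵥ X) j * e j) with hS2ee
  set S2Xe := ∑ i, ∑ j ∈ univ.erase i, Ptilde2 P i j *
      ((Mmat P *ᵥ X) i * X i) * ((Mmat P *ᵥ X) j * e j) with hS2Xe
  set S2eX := ∑ i, ∑ j ∈ univ.erase i, Ptilde2 P i j *
      ((Mmat P *ᵥ X) i * e i) * ((Mmat P *ᵥ X) j * X j) with hS2eX
  set S2XX := ∑ i, ∑ j ∈ univ.erase i, Ptilde2 P i j *
      ((Mmat P *ᵥ X) i * X i) * ((Mmat P *ᵥ X) j * X j) with hS2XX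
  have hPsiW : S1ee + S2ee = (K : ℝ) * Psihat K P X e := by
    rw [hS1ee, hS2ee]
    simp only [Psihat]
    field_simp
  have hUpsW : S1XX + S2XX = (K : ℝ) * Upshat K P X := by
    rw [hS1XX, hS2XX]
    simp only [Upshat]
    field_simp
  have htauW : S1Xe + S1eX + (S2Xe + S2eX) = 2 * (K : ℝ) * tauhat K P X e := by
    have t1 : (∑ i, (∑ j ∈ univ.erase i, P i j * X j) ^ 2 *
        (X i * (Mmat P *ᵥ e) i / Mmat P i i + e i * (Mmat P *ᵥ X) i / Mmat P i i))
        = S1Xe + S1eX := by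
      rw [hS1Xe, hS1eX, ← Finset.sum_add_distrib]
      exact Finset.sum_congr rfl fun i _ => by ring
    have t2 : (∑ i, ∑ j ∈ univ.erase i, Ptilde2 P i j *
        ((Mmat P *ᵥ X) i * X i * ((Mmat P *ᵥ X) j * e j) +
          (Mmat P *ᵥ X) i * e i * ((Mmat P *ᵥ X) j * X j)))
        = S2Xe + S2eX := by
      rw [hS2Xe, hS2eX, ← Finset.sum_add_distrib]
      refine Finset.sum_congr rfl fun i _ => ?_
      rw [← Finset.sum_add_distrib]
      exact Finset.sum_congr rfl fun j _ => by ring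
    simp only [tauhat]
    rw [t1, t2]
    field_simp
    try ring
  have e1 : (∑ i, (∑ j ∈ univ.erase i, P i j * X j) ^ 2 *
      ((e i - SeX / SXX * X i) *
        ((Mmat P *ᵥ e) i - SeX / SXX * (Mmat P *ᵥ X) i) / Mmat P i i))
      = S1ee - SeX / SXX * (S1Xe + S1eX) + (SeX / SXX) ^ 2 * S1XX := by
    rw [hS1ee, hS1Xe, hS1eX, hS1XX]
    exact expand_aux _ _ _ _ _ _ _ fun i _ => by ring
  have e2 : (∑ i, ∑ j ∈ univ.erase i, Ptilde2 P i j *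
      ((Mmat P *ᵥ X) i * (e i - SeX / SXX * X i)) *
      ((Mmat P *ᵥ X) j * (e j - SeX / SXX * X j)))
      = S2ee - SeX / SXX * (S2Xe + S2eX) + (SeX / SXX) ^ 2 * S2XX := by
    rw [hS2ee, hS2Xe, hS2eX, hS2XX]
    exact expand_aux _ _ _ _ _ _ _ fun i _ =>
      expand_aux _ _ _ _ _ _ _ fun j _ => by ring
  set W := S1ee + S2ee - SeX / SXX * (S1Xe + S1eX + (S2Xe + S2eX)) +
      (SeX / SXX) ^ 2 * (S1XX + S2XX) with hWdef
  have hVeq : Vhat P X Y = W / SXX ^ 2 := by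
    simp only [Vhat]
    rw [hmul]
    simp only [hhat]
    rw [e1, e2, ← hSXX_def, hWdef]
    ring
  have hWne : W ≠ 0 := fun h => hV (by rw [hVeq, h, zero_div])
  have hSeX' : SeX = ξ * sP * sK := by
    rw [← hsym, hξ, hQXe']
    field_simp
    try ring
  have hSXX' : SXX = ν * sU * sK := by
    rw [hν, hQXX']
    field_simp
    try ring
  have htau' : tauhat K P X e
      = ρ * (sP * sU) := by
    rw [hρ, hsplit]
    exact (div_mul_cancel₀ _ (mul_ne_zero hsP.ne' hsU.ne')).symm
  have hνne : ν ≠ 0 := by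
    rw [hν]; exact div_ne_zero hQXX hsU.ne'
  have hPsiW2 : S1ee + S2ee = sK ^ 2 * sP ^ 2 := by
    rw [hsK2, hsP2]; exact hPsiW
  have hUpsW2 : S1XX + S2XX = sK ^ 2 * sU ^ 2 := by
    rw [hsK2, hsU2]; exact hUpsW
  have htauW2 : S1Xe + S1eX + (S2Xe + S2eX)
      = 2 * sK ^ 2 *
        (ρ * (sP * sU)) := by
    rw [hsK2, ← htau']; exact htauW
  have hW2 : W = (sK * sP) ^ 2 *
      (1 - 2 * (ξ / ν) * ρ + ξ ^ 2 / ν ^ 2) := by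
    rw [hWdef, hPsiW2, hUpsW2, htauW2, hSeX', hSXX']
    field_simp
    try ring
  have hDne : (1 - 2 * (ξ / ν) * ρ + ξ ^ 2 / ν ^ 2) ≠ 0 :=
    fun h => hWne (by rw [hW2, h, mul_zero])
  have hbstat : betaJIVE P X Y - β₀ = SeX / SXX := by rw [hbeta]; ring
  rw [ht2, hbstat, hVeq]
  have step1 : (SeX / SXX) ^ 2 / (W / SXX ^ 2) = SeX ^ 2 / W := by
    field_simp
  rw [step1, hSeX', hW2,
    show (ξ * sP * sK) ^ 2 = (sK * sP) ^ 2 * ξ ^ 2 from by ring,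
    mul_div_mul_left _ _ (pow_ne_zero 2 (mul_ne_zero hsK.ne' hsP.ne'))]
end

section
/- Let N ≥ 2 and K ≥ 1 be integers, let X, Y ∈ ℝ^N, let P be a symmetric N×N real matrix, set M := I_N − P, and assume M_{ii} ≠ 0 for all i and M_{ii}M_{jj} + M_{ij}² ≠ 0 for all i ≠ j; define P̃²_{ij} := P_{ij}²/(M_{ii}M_{jj} + M_{ij}²) and Q_{AB} := K^{−1/2} Σ_{i=1}^N Σ_{j≠i} P_{ij} A_i B_j. Fix β₀ ∈ ℝ, set e(β₀) := Y − β₀X, assume Q_{XX} ≠ 0, let β̂_JIVE := (Σ_i Σ_{j≠i} P_{ij} Y_i X_j)/(Σ_i Σ_{j≠i} P_{ij} X_i X_j) and ê := Y − β̂_JIVE·X. Define V̂ := [Σ_i (Σ_{j≠i} P_{ij}X_j)² ê_i (Mê)_i / M_{ii} + Σ_i Σ_{j≠i} P̃²_{ij} (MX)_i ê_i (MX)_j ê_j] / (Σ_i Σ_{j≠i} P_{ij} X_i X_j)², Υ̂ := (1/K) Σ_i (Σ_{j≠i} P_{ij}X_j)² X_i(MX)_i/M_{ii} + (1/K) Σ_i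 Σ_{j≠i} P̃²_{ij}(MX)_i X_i (MX)_j X_j, Ψ̂(β₀) := (1/K) Σ_i (Σ_{j≠i} P_{ij}X_j)² e_i(β₀)(Me(β₀))_i/M_{ii} + (1/K) Σ_i Σ_{j≠i} P̃²_{ij}(MX)_i e_i(β₀)(MX)_j e_j(β₀), and τ̂(β₀) := (1/2)[(1/K) Σ_i (Σ_{j≠i} P_{ij}X_j)² (X_i(Me(β₀))_i/M_{ii} + e_i(β₀)(MX)_i/M_{ii}) + (1/K) Σ_i Σ_{j≠i} P̃²_{ij}((MX)_i X_i (MX)_j e_j(β₀) + (MX)_i e_i(β₀)(MX)_j X_j)]. Then V̂ = [Ψ̂(β₀) − 2(Q_{Xe(β₀)}/Q_{XX})·τ̂(β₀) + (Q_{Xe(β₀)}/Q_{XX})²·Υ̂] / Q_{XX}². -/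
open Finset Matrix

noncomputable section

/-!
Up to the factors `S²` and `K`, where `S = ∑_i ∑_{j≠i} P_{ij} X_i X_j`, the quantities `V̂`, `Ψ̂`,
`2τ̂` and `Υ̂` are the values of a single bilinear form `V = jiveVarForm P X` at `(ê, ê)`, `(e, e)`,
`(X, e) + (e, X)` and `(X, X)`. For symmetric `P` the JIVE estimator satisfies
`β̂ = β₀ + Q_{Xe}/Q_{XX}`, so `ê = e - (Q_{Xe}/Q_{XX}) X`, and the claim is the bilinear expansion
of `V(ê, ê)`.
-/

namespace LinearMap.BilinForm

variable {R M : Type*} [CommRing R] [AddCommGroup M] [Module R M]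

theorem apply_sub_smul_sub_smul (B : LinearMap.BilinForm R M) (u x : M) (c : R) :
    B (u - c • x) (u - c • x) = B u u - c * (B x u + B u x) + c ^ 2 * B x x := by
  simp only [map_sub, map_smul, LinearMap.sub_apply, LinearMap.smul_apply, smul_eq_mul]
  ring

end LinearMap.BilinForm

noncomputable section

variable {N : ℕ}

def offDiagForm (P : Matrix (Fin N) (Fin N) ℝ) : LinearMap.BilinForm ℝ (Fin N → ℝ) :=
  LinearMap.mk₂ ℝ (fun A B => ∑ i, ∑ j ∈ univ.erase i, P i j * A i * B j)
    (fun A A' B => by simp only [Pi.add_apply, mul_add, add_mul, sum_add_distrib])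
    (fun c A B => by
      simp only [Pi.smul_apply, smul_eq_mul, mul_sum]
      exact sum_congr rfl fun i _ => sum_congr rfl fun j _ => by ring)
    (fun A B B' => by simp only [Pi.add_apply, mul_add, sum_add_distrib])
    (fun c A B => by
      simp only [Pi.smul_apply, smul_eq_mul, mul_sum]
      exact sum_congr rfl fun i _ => sum_congr rfl fun j _ => by ring)

def jiveVarForm (P : Matrix (Fin N) (Fin N) ℝ) (X : Fin N → ℝ) :
    LinearMap.BilinForm ℝ (Fin N → ℝ) :=
  LinearMap.mk₂ ℝ
    (fun u v =>
      ∑ i, (∑ j ∈ univ.erase i, P i j * X j) ^ 2 * (u i * (Mmat P *ᵥ v) i / Mmat P i i) +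
        ∑ i, ∑ j ∈ univ.erase i,
          Ptilde2 P i j * ((Mmat P *ᵥ X) i * u i) * ((Mmat P *ᵥ X) j * v j))
    (fun u u' v => by
      simp only [Pi.add_apply, mul_add, add_mul, add_div, sum_add_distrib]; abel)
    (fun c u v => by
      simp only [Pi.smul_apply, smul_eq_mul, mul_add, mul_sum]
      exact congrArg₂ (· + ·) (sum_congr rfl fun i _ => by ring)
        (sum_congr rfl fun i _ => sum_congr rfl fun j _ => by ring))
    (fun u v v' => by
      simp only [Pi.add_apply, mulVec_add, mul_add, add_div, sum_add_distrib]; abel)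
    (fun c u v => by
      simp only [Pi.smul_apply, mulVec_smul, smul_eq_mul, mul_add, mul_sum]
      exact congrArg₂ (· + ·) (sum_congr rfl fun i _ => by ring)
        (sum_congr rfl fun i _ => sum_congr rfl fun j _ => by ring))

theorem offDiagForm_comm {P : Matrix (Fin N) (Fin N) ℝ} (hP : P.IsSymm) (A B : Fin N → ℝ) :
    offDiagForm P B A = offDiagForm P A B := by
  show ∑ i, ∑ j ∈ univ.erase i, P i j * B i * A j =
    ∑ i, ∑ j ∈ univ.erase i, P i j * A i * B j
  rw [sum_comm' (s' := fun j => univ.erase j) (t' := univ) (fun i j => by simp [ne_comm, and_comm])]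
  refine sum_congr rfl fun i _ => sum_congr rfl fun j _ => ?_
  rw [hP.apply j i]
  ring

section

variable (K : ℕ) (P : Matrix (Fin N) (Fin N) ℝ) (X : Fin N → ℝ)

theorem Qstat_eq_offDiagForm (A B : Fin N → ℝ) :
    Qstat K P A B = (Real.sqrt K)⁻¹ * offDiagForm P A B := rfl

theorem betaJIVE_eq_offDiagForm (Y : Fin N → ℝ) :
    betaJIVE P X Y = offDiagForm P Y X / offDiagForm P X X := rfl

theorem Vhat_eq_jiveVarForm (Y : Fin N → ℝ) :
    Vhat P X Y = jiveVarForm P X (Y - betaJIVE P X Y • X) (Y - betaJIVE P X Y • X) /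
      offDiagForm P X X ^ 2 := rfl

theorem Psihat_eq_jiveVarForm (e : Fin N → ℝ) :
    Psihat K P X e = (K : ℝ)⁻¹ * jiveVarForm P X e e := by
  simp only [Psihat, jiveVarForm, LinearMap.mk₂_apply]
  ring

theorem tauhat_eq_jiveVarForm (e : Fin N → ℝ) :
    tauhat K P X e = (2 * K : ℝ)⁻¹ * (jiveVarForm P X X e + jiveVarForm P X e X) := by
  simp only [tauhat, jiveVarForm, LinearMap.mk₂_apply, mul_add, sum_add_distrib, mul_assoc]
  ring

theorem Upshat_eq_jiveVarForm : Upshat K P X = (K : ℝ)⁻¹ * jiveVarForm P X X X := by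
  simp only [Upshat, jiveVarForm, LinearMap.mk₂_apply]
  ring

end

theorem betaJIVE_eq_add {P : Matrix (Fin N) (Fin N) ℝ} {X : Fin N → ℝ} (hP : P.IsSymm)
    (hXX : offDiagForm P X X ≠ 0) (Y : Fin N → ℝ) (β : ℝ) :
    betaJIVE P X Y = β + offDiagForm P X (Y - β • X) / offDiagForm P X X := by
  rw [betaJIVE_eq_offDiagForm, offDiagForm_comm hP, map_sub, map_smul, smul_eq_mul, sub_div,
    mul_div_cancel_right₀ _ hXX]
  ring

end

theorem stmt_2_general (N K : ℕ)
    (X Y : Fin N → ℝ) (P : Matrix (Fin N) (Fin N) ℝ) (hP : P.IsSymm)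
    (β₀ : ℝ) (e : Fin N → ℝ) (he : e = fun i => Y i - β₀ * X i)
    (hQXX : Qstat K P X X ≠ 0) :
    Vhat P X Y =
      (Psihat K P X e -
          2 * (Qstat K P X e / Qstat K P X X) * tauhat K P X e +
          (Qstat K P X e / Qstat K P X X) ^ 2 * Upshat K P X) /
        Qstat K P X X ^ 2 := by
  rw [Qstat_eq_offDiagForm] at hQXX
  obtain ⟨hsqrtK, hXX⟩ := mul_ne_zero_iff.mp hQXX
  -- `(√0)⁻¹ = 0`, so `Q_{XX} ≠ 0` rules out `K = 0`
  have hK : (K : ℝ) ≠ 0 := by simpa using hsqrtK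
  have he' : e = Y - β₀ • X := by subst he; rfl
  have hratio : Qstat K P X e / Qstat K P X X = offDiagForm P X e / offDiagForm P X X := by
    rw [Qstat_eq_offDiagForm, Qstat_eq_offDiagForm, mul_div_mul_left _ _ hsqrtK]
  have hQXX_sq : Qstat K P X X ^ 2 = (K : ℝ)⁻¹ * offDiagForm P X X ^ 2 := by
    rw [Qstat_eq_offDiagForm, mul_pow, inv_pow, Real.sq_sqrt K.cast_nonneg]
  rw [Vhat_eq_jiveVarForm, betaJIVE_eq_add hP hXX Y β₀, add_smul, ← sub_sub, ← he',
    LinearMap.BilinForm.apply_sub_smul_sub_smul, Psihat_eq_jiveVarForm, tauhat_eq_jiveVarForm,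
    Upshat_eq_jiveVarForm, hratio, hQXX_sq]
  field_simp

theorem stmt_2 (N K : ℕ) (hN : 2 ≤ N) (hK : 1 ≤ K)
    (X Y : Fin N → ℝ) (P : Matrix (Fin N) (Fin N) ℝ) (hP : P.IsSymm)
    (hMii : ∀ i, Mmat P i i ≠ 0)
    (hMij : ∀ i j, i ≠ j → Mmat P i i * Mmat P j j + Mmat P i j ^ 2 ≠ 0)
    (β₀ : ℝ) (e : Fin N → ℝ) (he : e = fun i => Y i - β₀ * X i)
    (hQXX : Qstat K P X X ≠ 0) :
    Vhat P X Y =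
      (Psihat K P X e -
          2 * (Qstat K P X e / Qstat K P X X) * tauhat K P X e +
          (Qstat K P X e / Qstat K P X X) ^ 2 * Upshat K P X) /
        Qstat K P X X ^ 2 :=
  stmt_2_general N K X Y P hP β₀ e he hQXX
end
end
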